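/- Let k be a field of characteristic different from 2, R = k[x,y], R^{S₂} ⊆ R the subalgebra of symmetric polynomials, and B = R⊗_{R^{S₂}}R (a commutative ring). Set v := y⊗1 − 1⊗y and Γ := (y−x)⊗1 + 1⊗(y−x) in B. Then the kernel of the multiplication-by-v endomorphism of B equals R·Γ (left R-multiples of Γ) and is free of rank one as a left R-module with basis {Γ}; moreover the quotient B/vB is isomorphic to R as an (R,R)-bimodule, via the map induced by the multiplication map br : B → R. -/

import Mathlib

open MvPolynomial TensorProduct

/-- `R = k[x,y]` (`x = X 0`, `y = X 1`). -/
noncomputable abbrev stmt17R (k : Type) [Field k] := MvPolynomial (Fin 2) k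

/-- `R^{S₂}`, the subalgebra of symmetric polynomials. -/
noncomputable abbrev stmt17S (k : Type) [Field k] : Subalgebra k (stmt17R k) :=
  MvPolynomial.symmetricSubalgebra (Fin 2) k

/-- The Soergel bimodule `B = R ⊗_{R^{S₂}} R` (a commutative ring). -/
noncomputable abbrev stmt17B (k : Type) [Field k] :=
  (stmt17R k) ⊗[↥(stmt17S k)] (stmt17R k)

/-- `v = y⊗1 − 1⊗y ∈ B`. -/
noncomputable abbrev stmt17v (k : Type) [Field k] : stmt17B k :=
  (X 1 : stmt17R k) ⊗ₜ[↥(stmt17S k)] (1 : stmt17R k)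
    - (1 : stmt17R k) ⊗ₜ[↥(stmt17S k)] (X 1 : stmt17R k)

/-- `Γ = (y−x)⊗1 + 1⊗(y−x) ∈ B`. -/
noncomputable abbrev stmt17Γ (k : Type) [Field k] : stmt17B k :=
  ((X 1 - X 0 : stmt17R k) ⊗ₜ[↥(stmt17S k)] (1 : stmt17R k))
    + ((1 : stmt17R k) ⊗ₜ[↥(stmt17S k)] (X 1 - X 0 : stmt17R k))


/-!
As a left `R`-module, `B` is free on `1` and `y₂ = 1 ⊗ y`: spanning because every polynomial is
`s₀ + s₁ y` with `s₀, s₁` symmetric, independence because the two multiplication maps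
`f ⊗ g ↦ f g` and `f ⊗ g ↦ f · g(y, x)` differ by `y - x` on the `y₂`-coordinate. Since `x + y`
and `x y` are symmetric, `y₂` is a root of `(T - x)(T - y)`. In these coordinates `v = y - y₂` and
`Γ = 2 (y₂ - x)`, and both kernels are read off by comparing coefficients.
-/

namespace Soergel

variable {k : Type*} [CommRing k]

local notation "𝓡" => MvPolynomial (Fin 2) k
local notation "𝓢" => symmetricSubalgebra (Fin 2) k
local notation "ι" => Algebra.TensorProduct.includeLeftRingHom (R := ↥𝓢) (A := 𝓡) (B := 𝓡)
local notation "y₂" => (1 : 𝓡) ⊗ₜ[𝓢] (X 1 : 𝓡)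

theorem isSymmetric_of_rename_swap {p : 𝓡} (h : rename (Equiv.swap 0 1) p = p) :
    p.IsSymmetric := by
  intro σ
  obtain rfl | rfl : σ = 1 ∨ σ = Equiv.swap 0 1 := by revert σ; decide
  · simp
  · exact h

theorem isSymmetric_X_zero_add_X_one : (X 0 + X 1 : 𝓡).IsSymmetric :=
  isSymmetric_of_rename_swap <| by simp [add_comm]

theorem isSymmetric_X_zero_mul_X_one : (X 0 * X 1 : 𝓡).IsSymmetric :=
  isSymmetric_of_rename_swap <| by simp [mul_comm]

theorem exists_isSymmetric_add_mul_X_one (g : 𝓡) :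
    ∃ s₀ s₁ : 𝓡, s₀.IsSymmetric ∧ s₁.IsSymmetric ∧ g = s₀ + s₁ * X 1 := by
  induction g using MvPolynomial.induction_on with
  | C a => exact ⟨C a, 0, .C a, .zero, by ring⟩
  | add p q hp hq =>
    obtain ⟨a, b, ha, hb, rfl⟩ := hp
    obtain ⟨c, d, hc, hd, rfl⟩ := hq
    exact ⟨a + c, b + d, ha.add hc, hb.add hd, by ring⟩
  | mul_X p i hp =>
    obtain ⟨a, b, ha, hb, rfl⟩ := hp
    have he := isSymmetric_X_zero_add_X_one (k := k)
    have hm := isSymmetric_X_zero_mul_X_one (k := k)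
    -- `X 0 = (X 0 + X 1) - X 1` and `X 1 ^ 2 = (X 0 + X 1) * X 1 - X 0 * X 1`.
    fin_cases i
    · exact ⟨a * (X 0 + X 1) + b * (X 0 * X 1), -a, (ha.mul he).add (hb.mul hm), ha.neg,
        by simp; ring⟩
    · exact ⟨-(b * (X 0 * X 1)), a + b * (X 0 + X 1), (hb.mul hm).neg, ha.add (hb.mul he),
        by simp; ring⟩

theorem mul_tmul_of_isSymmetric {p : 𝓡} (hp : p.IsSymmetric) (f g : 𝓡) :
    (p * f) ⊗ₜ[𝓢] g = f ⊗ₜ[𝓢] (p * g) := by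
  simpa [Algebra.smul_def] using
    smul_tmul (⟨p, (mem_symmetricSubalgebra p).mpr hp⟩ : 𝓢) f g

theorem one_tmul_X_zero_add_one_tmul_X_one : (1 : 𝓡) ⊗ₜ[𝓢] (X 0 : 𝓡) + y₂ = ι (X 0) + ι (X 1) := by
  rw [← map_add, Algebra.TensorProduct.includeLeftRingHom_apply, ← tmul_add,
    ← mul_one (X 0 + X 1), mul_tmul_of_isSymmetric isSymmetric_X_zero_add_X_one, mul_one]

theorem one_tmul_X_one_sub_mul_sub_eq_zero : (y₂ - ι (X 0)) * (y₂ - ι (X 1)) = 0 := by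
  have h₁ := mul_tmul_of_isSymmetric isSymmetric_X_zero_add_X_one (1 : 𝓡) (X 1)
  have h₂ := mul_tmul_of_isSymmetric isSymmetric_X_zero_mul_X_one (1 : 𝓡) 1
  simp only [Algebra.TensorProduct.includeLeftRingHom_apply,
    Algebra.TensorProduct.tmul_mul_tmul, sub_mul, mul_sub, add_mul, add_tmul, tmul_add, mul_one,
    one_mul] at h₁ h₂ ⊢
  linear_combination h₂ - h₁

theorem exists_eq_includeLeft_add_mul (b : 𝓡 ⊗[𝓢] 𝓡) : ∃ a c : 𝓡, b = ι a + ι c * y₂ := by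
  induction b using TensorProduct.induction_on with
  | zero => exact ⟨0, 0, by simp⟩
  | tmul f g =>
    obtain ⟨s₀, s₁, h₀, h₁, rfl⟩ := exists_isSymmetric_add_mul_X_one g
    refine ⟨s₀ * f, s₁ * f, ?_⟩
    simp only [Algebra.TensorProduct.includeLeftRingHom_apply,
      Algebra.TensorProduct.tmul_mul_tmul, tmul_add, mul_one, one_mul]
    rw [mul_tmul_of_isSymmetric h₀, mul_tmul_of_isSymmetric h₁, mul_one]
  | add x y hx hy =>
    obtain ⟨a, c, rfl⟩ := hx
    obtain ⟨a', c', rfl⟩ := hy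
    exact ⟨a + a', c + c', by simp only [map_add]; ring⟩

variable (k) in
noncomputable def renameSwap : 𝓡 →ₐ[𝓢] 𝓡 where
  toRingHom := (rename (R := k) (Equiv.swap (0 : Fin 2) 1)).toRingHom
  commutes' s := s.2 (Equiv.swap 0 1)

theorem eq_zero_of_includeLeft_add_mul_eq_zero [IsDomain k] {a c : 𝓡}
    (h : ι a + ι c * y₂ = 0) : a = 0 ∧ c = 0 := by
  simp only [Algebra.TensorProduct.includeLeftRingHom_apply,
    Algebra.TensorProduct.tmul_mul_tmul, mul_one, one_mul] at h
  have h₁ : a + c * X 1 = 0 := by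
    simpa using congrArg (Algebra.TensorProduct.lmul' 𝓢) h
  have h₀ : a + c * X 0 = 0 := by
    simpa [renameSwap] using
      congrArg (Algebra.TensorProduct.productMap (AlgHom.id 𝓢 𝓡) (renameSwap k)) h
  have hc : c * (X 1 - X 0) = 0 := by linear_combination h₁ - h₀
  obtain rfl : c = 0 := (mul_eq_zero.mp hc).resolve_right <|
    sub_ne_zero.mpr fun h => absurd (X_injective h) (by decide)
  exact ⟨by simpa using h₁, rfl⟩

theorem includeLeft_sub_mul_eq_zero_iff [IsDomain k] (b : 𝓡 ⊗[𝓢] 𝓡) :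
    (ι (X 1) - y₂) * b = 0 ↔ ∃ c : 𝓡, b = ι c * (y₂ - ι (X 0)) := by
  constructor
  · intro h
    obtain ⟨a, c, rfl⟩ := exists_eq_includeLeft_add_mul b
    have hc : ι (X 1 * a + X 0 * X 1 * c) + ι (-(a + X 0 * c)) * y₂ = 0 := by
      simp only [map_add, map_mul, map_neg]
      linear_combination h + ι c * one_tmul_X_one_sub_mul_sub_eq_zero (k := k)
    obtain rfl : a = -(X 0 * c) := by
      linear_combination -(eq_zero_of_includeLeft_add_mul_eq_zero hc).2
    exact ⟨c, by simp only [map_neg, map_mul]; ring⟩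
  · rintro ⟨c, rfl⟩
    linear_combination (-ι c) * one_tmul_X_one_sub_mul_sub_eq_zero (k := k)

theorem eq_zero_of_includeLeft_mul_eq_zero [IsDomain k] {f : 𝓡}
    (h : ι f * (y₂ - ι (X 0)) = 0) : f = 0 :=
  (eq_zero_of_includeLeft_add_mul_eq_zero (a := -(X 0 * f)) (c := f) <| by
    simp only [map_neg, map_mul]
    linear_combination h).2

theorem lmul'_eq_zero_iff (b : 𝓡 ⊗[𝓢] 𝓡) :
    Algebra.TensorProduct.lmul' 𝓢 b = 0 ↔ ∃ c, b = (ι (X 1) - y₂) * c := by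
  constructor
  · intro h
    obtain ⟨a, c, rfl⟩ := exists_eq_includeLeft_add_mul b
    obtain rfl : a = -(c * X 1) := by
      simpa [eq_neg_iff_add_eq_zero] using h
    exact ⟨ι (-c), by simp only [map_neg, map_mul]; ring⟩
  · rintro ⟨c, rfl⟩
    simp

theorem apply_eq_lmul' {F : Type*} [FunLike F (𝓡 ⊗[𝓢] 𝓡) 𝓡]
    [AddMonoidHomClass F (𝓡 ⊗[𝓢] 𝓡) 𝓡] (φ : F) (hφ : ∀ f g : 𝓡, φ (f ⊗ₜ g) = f * g)
    (b : 𝓡 ⊗[𝓢] 𝓡) :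
    φ b = Algebra.TensorProduct.lmul' 𝓢 b := by
  induction b using TensorProduct.induction_on with
  | zero => simp
  | tmul f g => simp [hφ]
  | add x y hx hy => simp [hx, hy]

theorem includeLeft_add_one_tmul_sub :
    ι (X 1 - X 0) + (1 : 𝓡) ⊗ₜ[𝓢] (X 1 - X 0 : 𝓡) = 2 * (y₂ - ι (X 0)) := by
  rw [tmul_sub, map_sub]
  linear_combination (-1 : 𝓡 ⊗[𝓢] 𝓡) * one_tmul_X_zero_add_one_tmul_X_one (k := k)

end Soergel

open Soergel in
theorem stmt_17 (k : Type) [Field k] (hchar : (2 : k) ≠ 0)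
    (br : stmt17B k →ₗ[k] stmt17R k)
    (hbr : ∀ f g : stmt17R k, br (f ⊗ₜ[↥(stmt17S k)] g) = f * g) :
    (∀ b : stmt17B k,
        stmt17v k * b = 0 ↔
          ∃ f : stmt17R k, b = (f ⊗ₜ[↥(stmt17S k)] (1 : stmt17R k)) * stmt17Γ k) ∧
    (∀ f : stmt17R k,
        (f ⊗ₜ[↥(stmt17S k)] (1 : stmt17R k)) * stmt17Γ k = 0 → f = 0) ∧
    Function.Surjective br ∧
    (∀ b : stmt17B k, br b = 0 ↔ ∃ c : stmt17B k, b = stmt17v k * c) := by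
  simp only [stmt17v, stmt17Γ, ← Algebra.TensorProduct.includeLeftRingHom_apply,
    includeLeft_add_one_tmul_sub]
  have hinv : (C 2⁻¹ : stmt17R k) * 2 = 1 := by
    rw [← map_ofNat C 2, ← C_mul, inv_mul_cancel₀ hchar, C_1]
  have hinvB := congrArg
    (Algebra.TensorProduct.includeLeftRingHom (R := ↥(stmt17S k)) (B := stmt17R k)) hinv
  rw [map_mul, map_one, map_ofNat] at hinvB
  refine ⟨fun b => ?_, fun f hf => ?_, fun f => ⟨f ⊗ₜ 1, by rw [hbr, mul_one]⟩, fun b => ?_⟩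
  · rw [includeLeft_sub_mul_eq_zero_iff]
    constructor
    · rintro ⟨c, rfl⟩
      exact ⟨C 2⁻¹ * c, by rw [map_mul, mul_mul_mul_comm, hinvB, one_mul]⟩
    · rintro ⟨f, rfl⟩
      exact ⟨2 * f, by rw [map_mul, map_ofNat]; ring⟩
  · have h2f := eq_zero_of_includeLeft_mul_eq_zero (f := 2 * f) <| by
      rw [map_mul, map_ofNat]
      linear_combination hf
    linear_combination C 2⁻¹ * h2f - f * hinv
  · rw [apply_eq_lmul' br hbr, lmul'_eq_zero_iff]
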